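/- Let r ≥ 1, R = {e_1,…,e_r} ⊆ GF(2)^r the root basis, B ≠ R a basis, and let P = π(B) be the parent of B, so that P = (B \ {y}) ∪ {e_i} where y = min(B \ R) and e_i = min(R ∩ Ex_in(B; y)). Let υ ∈ Ex_in(P; e_i), z = Succ(υ), z' = Succ^{(2^{r−i})}(z), and z'' = Succ^{(2^{r−i+1})}(z), and assume z ≠ 𝟎 and z ∉ Ex_in(P; e_i). Then: (ii) if z' ≠ 𝟎, then no element c with z ≺ c ≺ z' belongs to Ex_in(P; e_i); (iii) if z'' ≠ 𝟎 and z' ∉ Ex_in(P; e_i), then no element c with z ≺ c ≺ z'' belongs to Ex_in(P; e_i); (iv) if z'' = 𝟎 and z' ∉ Ex_in(P; e_i), then no element c with c ≻ z belongs to Ex_in(P; e_i). -/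

import Mathlib

/-- An element: a vector in `GF(2)^r`. -/
abbrev Elt (r : ℕ) := Fin r → ZMod 2

/-- A basis: a set of `r` linearly independent vectors of `GF(2)^r`. -/
def IsBasisSet {r : ℕ} (B : Finset (Elt r)) : Prop :=
  B.card = r ∧ LinearIndependent (ZMod 2) (Subtype.val : {x // x ∈ B} → Elt r)

/-- `bin(c) = (c_1 c_2 … c_r)₂`. -/
def binOf {r : ℕ} (c : Elt r) : ℕ := ∑ i : Fin r, (c i).val * 2 ^ (r - 1 - (i : ℕ))

/-- The `i`-th standard unit vector of `GF(2)^r`. -/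
def stdVec (r : ℕ) (i : Fin r) : Elt r := fun j => if j = i then 1 else 0

/-- The root basis `R = {e_1, …, e_r}` of standard unit vectors. -/
def rootB (r : ℕ) : Finset (Elt r) := Finset.univ.image (stdVec r)

/-- `Ex_in(B; x)`: the elements `y` such that `(x,y)` is an exchange for the basis `B`,
together with `x` itself. -/
def ExIn {r : ℕ} (B : Finset (Elt r)) (x : Elt r) : Set (Elt r) :=
  {y | y ∉ B ∧ IsBasisSet (insert y (B.erase x))} ∪ {x}

/-- The all-ones vector `𝟏`. -/
def allOnes (r : ℕ) : Elt r := fun _ => 1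

/-- The all-zeros vector `𝟎`. -/
def allZeros (r : ℕ) : Elt r := fun _ => 0

/-- `Succ(c)`: the element with `bin(Succ(c)) = bin(c) + 1` if `c ∉ {𝟏, 𝟎}`, and `𝟎`
otherwise. -/
def succElt {r : ℕ} (c : Elt r) : Elt r :=
  if c = allOnes r ∨ c = allZeros r then allZeros r
  else fun i => (((binOf c + 1) / 2 ^ (r - 1 - (i : ℕ))) % 2 : ℕ)

open Classical in
/-- The `≺`-minimum element of a set of elements (junk value if no minimum exists). -/
noncomputable def minElt {r : ℕ} (P : Set (Elt r)) : Elt r :=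
  if h : ∃ c, c ∈ P ∧ ∀ d ∈ P, binOf c ≤ binOf d then h.choose else allZeros r

/-- The parent `π(B) = (B \ {min(B \ R)}) ∪ {min(R ∩ Ex_in(B; min(B \ R)))}` of a basis
`B ≠ R`. -/
noncomputable def parentB {r : ℕ} (B : Finset (Elt r)) : Finset (Elt r) :=
  insert (minElt ((↑(rootB r) : Set (Elt r)) ∩ ExIn B (minElt ((↑B : Set (Elt r)) \ ↑(rootB r)))))
    (B.erase (minElt ((↑B : Set (Elt r)) \ ↑(rootB r))))

lemma sum_two_pow' (r : ℕ) : ∑ j ∈ Finset.range r, 2^j = 2^r - 1 := by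
  induction r with
  | zero => simp
  | succ n ih => rw [Finset.sum_range_succ, ih]; have : 1 ≤ 2^n := Nat.one_le_two_pow; omega

lemma digit_lemma (r k : ℕ) (d : ℕ → ℕ) (hd : ∀ j, d j ≤ 1) (hk : k < r) :
    (∑ j ∈ Finset.range r, d j * 2^j) / 2^k % 2 = d k := by
  have h1 : r = k + ((r - k - 1) + 1) := by omega
  rw [h1, Finset.sum_range_add, Finset.sum_range_succ']
  simp only [add_zero]
  have h2 : ∀ j, d (k + (j+1)) * 2^(k + (j+1)) = 2^k * (2 * (d (k + (j+1)) * 2^j)) := by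
    intro j; ring
  rw [Finset.sum_congr rfl (fun j _ => h2 j), ← Finset.mul_sum, ← Finset.mul_sum]
  have hL : (∑ x ∈ Finset.range k, d x * 2^x) < 2^k := by
    calc (∑ x ∈ Finset.range k, d x * 2^x) ≤ ∑ x ∈ Finset.range k, 1 * 2^x :=
      Finset.sum_le_sum (fun j _ => Nat.mul_le_mul_right _ (hd j))
    _ = 2^k - 1 := by simpa using sum_two_pow' k
    _ < 2^k := by have : 1 ≤ 2^k := Nat.one_le_two_pow; omega
  have hpos : 0 < 2 ^ k := Nat.pow_pos (by norm_num)
  rw [show (∑ x ∈ Finset.range k, d x * 2 ^ x +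
        (2 ^ k * (2 * ∑ i ∈ Finset.range (r - k - 1), d (k + (i + 1)) * 2 ^ i) + d k * 2 ^ k))
      = ((∑ x ∈ Finset.range k, d x * 2 ^ x) +
        2 ^ k * (d k + 2 * ∑ i ∈ Finset.range (r - k - 1), d (k + (i + 1)) * 2 ^ i)) by ring]
  rw [Nat.add_mul_div_left _ _ hpos, Nat.div_eq_of_lt hL, zero_add,
    Nat.add_mul_mod_self_left, Nat.mod_eq_of_lt (by have := hd k; omega : d k < 2)]

lemma sum_mod_pow (r n : ℕ) : ∑ j ∈ Finset.range r, (n / 2^j % 2) * 2^j = n % 2^r := by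
  induction r with
  | zero => simp [Nat.mod_one]
  | succ m ih =>
    rw [Finset.sum_range_succ, ih, pow_succ, Nat.mod_mul]
    ring

def eltOf (r n : ℕ) : Elt r := fun i => (((n / 2 ^ (r - 1 - (i : ℕ))) % 2 : ℕ) : ZMod 2)

def dg {r : ℕ} (c : Elt r) (j : ℕ) : ℕ :=
  if h : r - 1 - j < r then (c ⟨r - 1 - j, h⟩).val else 0

lemma dg_le {r : ℕ} (c : Elt r) (j : ℕ) : dg c j ≤ 1 := by
  unfold dg; split
  · exact Nat.lt_succ_iff.mp (ZMod.val_lt _)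
  · omega

lemma binOf_eq {r : ℕ} (c : Elt r) : binOf c = ∑ j ∈ Finset.range r, dg c j * 2^j := by
  unfold binOf
  have h : ∀ i : Fin r, (c i).val * 2 ^ (r - 1 - (i : ℕ))
      = (fun j => (if h : j < r then (c ⟨j, h⟩).val else 0) * 2^(r - 1 - j)) (i : ℕ) := by
    intro i; simp [i.isLt]
  rw [Finset.sum_congr rfl (fun i _ => h i),
    Fin.sum_univ_eq_sum_range (fun j => (if h : j < r then (c ⟨j, h⟩).val else 0) * 2^(r - 1 - j)) r,
    ← Finset.sum_range_reflect]
  refine Finset.sum_congr rfl (fun j hj => ?_)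
  have hjr : j < r := Finset.mem_range.mp hj
  have h1 : r - 1 - (r - 1 - j) = j := by omega
  have h2 : r - 1 - j < r := by omega
  rw [dif_pos h2, h1]
  unfold dg
  rw [dif_pos h2]

lemma binOf_le {r : ℕ} (c : Elt r) : binOf c ≤ 2^r - 1 := by
  rw [binOf_eq]
  calc ∑ j ∈ Finset.range r, dg c j * 2^j ≤ ∑ j ∈ Finset.range r, 1 * 2^j :=
    Finset.sum_le_sum (fun j _ => Nat.mul_le_mul_right _ (dg_le c j))
  _ = 2^r - 1 := by simpa using sum_two_pow' r

lemma binOf_lt {r : ℕ} (c : Elt r) : binOf c < 2^r := by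
  have := binOf_le c; have : 1 ≤ 2^r := Nat.one_le_two_pow; omega

lemma val_eq_digit {r : ℕ} (c : Elt r) (i : Fin r) :
    (c i).val = binOf c / 2 ^ (r - 1 - (i : ℕ)) % 2 := by
  rw [binOf_eq, digit_lemma r (r - 1 - (i : ℕ)) (dg c) (dg_le c) (by have := i.isLt; omega)]
  unfold dg
  have hi2 := i.isLt
  have h2 : r - 1 - (r - 1 - (i : ℕ)) < r := by omega
  rw [dif_pos h2]
  have hidx : (⟨r - 1 - (r - 1 - (i : ℕ)), h2⟩ : Fin r) = i :=
    Fin.ext (show r - 1 - (r - 1 - (i : ℕ)) = (i : ℕ) by omega)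
  rw [hidx]

lemma binOf_inj {r : ℕ} {c d : Elt r} (h : binOf c = binOf d) : c = d := by
  funext i
  exact ZMod.val_injective 2 (by rw [val_eq_digit, val_eq_digit, h])

lemma binOf_eltOf (r n : ℕ) : binOf (eltOf r n) = n % 2^r := by
  rw [binOf_eq, ← sum_mod_pow r n]
  refine Finset.sum_congr rfl (fun j hj => ?_)
  have hjr : j < r := Finset.mem_range.mp hj
  have h2 : r - 1 - j < r := by omega
  unfold dg eltOf
  rw [dif_pos h2]
  have h1 : r - 1 - (r - 1 - j) = j := by omega
  simp only [h1, ZMod.val_natCast]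
  rw [Nat.mod_mod_of_dvd _ (by norm_num)]

lemma binOf_allZeros (r : ℕ) : binOf (allZeros r) = 0 := by
  unfold binOf allZeros; simp

lemma binOf_allOnes (r : ℕ) : binOf (allOnes r) = 2^r - 1 := by
  unfold binOf allOnes
  have : ∀ i : Fin r, (1 : ZMod 2).val * 2 ^ (r - 1 - (i : ℕ)) = (fun j => 2^(r-1-j)) (i : ℕ) := by
    intro i; simp [ZMod.val_one]
  rw [Finset.sum_congr rfl (fun i _ => this i), Fin.sum_univ_eq_sum_range (fun j => 2^(r-1-j)) r,
    Finset.sum_range_reflect (fun j => 2^j) r, sum_two_pow']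

lemma ne_allZeros_iff {r : ℕ} (c : Elt r) : c ≠ allZeros r ↔ binOf c ≠ 0 := by
  constructor
  · intro h h0; exact h (binOf_inj (by rw [h0, binOf_allZeros]))
  · intro h h0; exact h (by rw [h0, binOf_allZeros])

lemma succElt_allZeros (r : ℕ) : succElt (allZeros r) = allZeros r := by
  unfold succElt; rw [if_pos (Or.inr rfl)]

lemma succElt_bin {r : ℕ} (c : Elt r) (h0 : c ≠ allZeros r) (h1 : c ≠ allOnes r) :
    binOf (succElt c) = binOf c + 1 := by
  have he : succElt c = eltOf r (binOf c + 1) := by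
    unfold succElt eltOf; rw [if_neg (by tauto)]
  have hlt : binOf c + 1 < 2^r := by
    have := binOf_le c
    have hne : binOf c ≠ 2^r - 1 := fun h => h1 (binOf_inj (by rw [h, binOf_allOnes]))
    have : 1 ≤ 2^r := Nat.one_le_two_pow
    omega
  rw [he, binOf_eltOf, Nat.mod_eq_of_lt hlt]

lemma iter_succ {r : ℕ} (c : Elt r) (h0 : c ≠ allZeros r) (k : ℕ) :
    (binOf c + k < 2^r → binOf (succElt^[k] c) = binOf c + k) ∧
    (2^r ≤ binOf c + k → succElt^[k] c = allZeros r) := by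
  have hc0 : binOf c ≠ 0 := (ne_allZeros_iff c).mp h0
  induction k with
  | zero =>
    refine ⟨fun _ => rfl, fun h => absurd (binOf_lt c) (by omega)⟩
  | succ k ih =>
    rw [Function.iterate_succ_apply']
    constructor
    · intro hlt
      have hk : binOf c + k < 2^r := by omega
      have hu := ih.1 hk
      have hu0 : succElt^[k] c ≠ allZeros r := by
        rw [ne_allZeros_iff, hu]; omega
      have hu1 : succElt^[k] c ≠ allOnes r := by
        intro h
        rw [h, binOf_allOnes] at hu
        omega
      rw [succElt_bin _ hu0 hu1, hu]
      omega
    · intro hge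
      by_cases hk : 2^r ≤ binOf c + k
      · rw [ih.2 hk, succElt_allZeros]
      · have hu := ih.1 (by omega)
        have : succElt^[k] c = allOnes r := binOf_inj (by rw [hu, binOf_allOnes]; omega)
        rw [this]
        unfold succElt; rw [if_pos (Or.inl rfl)]
lemma exIn_eq_span {r : ℕ} (P : Finset (Elt r)) (hP : IsBasisSet P) (x : Elt r) (hx : x ∈ P)
    (c : Elt r) :
    c ∈ ExIn P x ↔ c ∉ Submodule.span (ZMod 2) (↑(P.erase x) : Set (Elt r)) := by
  classical
  have hxe : x ∉ (↑(P.erase x) : Set (Elt r)) := by simp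
  have hs : (↑P : Set (Elt r)) = insert x (↑(P.erase x) : Set (Elt r)) := by
    rw [← Finset.coe_insert, Finset.insert_erase hx]
  have hindP : LinearIndependent (ZMod 2) (fun b : (↑P : Set (Elt r)) => (b : Elt r)) := hP.2
  rw [hs] at hindP
  have key := (linearIndepOn_id_insert hxe).mp hindP
  constructor
  · rintro (⟨hcP, hbasis⟩ | hcx)
    · have hcE : c ∉ (↑(P.erase x) : Set (Elt r)) := by
        simp only [Finset.coe_erase, Set.mem_diff]
        intro h; exact hcP h.1
      have hind : LinearIndependent (ZMod 2)
          (fun b : (↑(insert c (P.erase x)) : Set (Elt r)) => (b : Elt r)) := hbasis.2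
      rw [Finset.coe_insert] at hind
      exact ((linearIndepOn_id_insert hcE).mp hind).2
    · have : c = x := hcx
      rw [this]; exact key.2
  · intro hc
    have hcE : c ∉ (↑(P.erase x) : Set (Elt r)) := fun h => hc (Submodule.subset_span h)
    by_cases hcx : c = x
    · exact Or.inr hcx
    · refine Or.inl ⟨?_, ?_, ?_⟩
      · intro hcP
        exact hcE (by exact_mod_cast Finset.mem_erase.mpr ⟨hcx, hcP⟩)
      · have hr1 : 1 ≤ r := by
          rw [← hP.1]; exact Finset.card_pos.mpr ⟨x, hx⟩
        rw [Finset.card_insert_of_notMem (fun h => hcE (by exact_mod_cast h)),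
          Finset.card_erase_of_mem hx, hP.1]
        omega
      · have hind := (linearIndepOn_id_insert hcE).mpr ⟨key.1, hc⟩
        rw [← Finset.coe_insert] at hind
        exact hind

lemma expand_std {r : ℕ} (v : Elt r) : ∑ j : Fin r, v j • stdVec r j = v := by
  funext k
  simp only [Finset.sum_apply, Pi.smul_apply, stdVec, smul_eq_mul, mul_ite, mul_one, mul_zero]
  simp

lemma mem_H_congr {r : ℕ} (i : Fin r) (H : Submodule (ZMod 2) (Elt r))
    (hstd : ∀ j : Fin r, (i : ℕ) < (j : ℕ) → stdVec r j ∈ H) (c d : Elt r)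
    (h : ∀ j : Fin r, (j : ℕ) ≤ (i : ℕ) → c j = d j) : c ∈ H ↔ d ∈ H := by
  have hsub : c - d ∈ H := by
    rw [← expand_std (c - d)]
    apply Submodule.sum_mem
    intro j _
    by_cases hj : (j : ℕ) ≤ (i : ℕ)
    · have h0 : (c - d) j = 0 := by simp [h j hj]
      rw [h0, zero_smul]; exact H.zero_mem
    · exact H.smul_mem _ (hstd j (by omega))
  constructor
  · intro hc; have := H.sub_mem hc hsub; simpa using this
  · intro hd; have := H.add_mem hd hsub; simpa using this

lemma minElt_spec {r : ℕ} (S : Set (Elt r))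
    (h : ∃ c, c ∈ S ∧ ∀ d ∈ S, binOf c ≤ binOf d) :
    minElt S ∈ S ∧ ∀ d ∈ S, binOf (minElt S) ≤ binOf d := by
  unfold minElt; rw [dif_pos h]; exact h.choose_spec

lemma binOf_stdVec (r : ℕ) (j : Fin r) : binOf (stdVec r j) = 2 ^ (r - 1 - (j : ℕ)) := by
  unfold binOf stdVec
  rw [Finset.sum_eq_single j]
  · simp [ZMod.val_one]
  · intro b _ hbj
    simp [hbj]
  · simp

lemma coords_eq_of_div {r : ℕ} (i : Fin r) (c d : Elt r)
    (h : binOf c / 2 ^ (r - 1 - (i : ℕ)) = binOf d / 2 ^ (r - 1 - (i : ℕ))) :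
    ∀ j : Fin r, (j : ℕ) ≤ (i : ℕ) → c j = d j := by
  intro j hj
  apply ZMod.val_injective
  rw [val_eq_digit, val_eq_digit]
  have hi := i.isLt
  have h1 : r - 1 - (j : ℕ) = (r - 1 - (i : ℕ)) + ((i : ℕ) - (j : ℕ)) := by omega
  rw [h1, pow_add, ← Nat.div_div_eq_div_mul, ← Nat.div_div_eq_div_mul, h]


lemma div_eq_helper {w a b : ℕ} (hw : 0 < w) (hd : w ∣ a) (h1 : a ≤ b) (h2 : b < a + w) :
    b / w = a / w := by
  obtain ⟨q, rfl⟩ := hd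
  rw [Nat.mul_div_cancel_left _ hw]
  refine Nat.div_eq_of_lt_le (by rw [mul_comm]; exact h1) ?_
  calc b < w * q + w := h2
  _ = (q + 1) * w := by ring

/-- Let `B ≠ R` be a basis with parent `P = π(B) = (B \ {y}) ∪ {e_i}`, where
`y = min(B \ R)` and `e_i = min(R ∩ Ex_in(B; y))`. Let `υ ∈ Ex_in(P; e_i)`,
`z = Succ(υ)`, `z' = Succ^(2^(r-i))(z)` and `z'' = Succ^(2^(r-i+1))(z)` (with the paper's
1-based index of `e_i` being `i + 1` for `i : Fin r`), and assume `z ≠ 𝟎` and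
`z ∉ Ex_in(P; e_i)`. Then: (ii) if `z' ≠ 𝟎`, no element strictly `≺`-between `z` and `z'`
is in `Ex_in(P; e_i)`; (iii) if `z'' ≠ 𝟎` and `z' ∉ Ex_in(P; e_i)`, no element strictly
`≺`-between `z` and `z''` is in `Ex_in(P; e_i)`; (iv) if `z'' = 𝟎` and
`z' ∉ Ex_in(P; e_i)`, no element `≻ z` is in `Ex_in(P; e_i)`. -/
theorem stmt_17 (r : ℕ) (hr : 1 ≤ r) (B : Finset (Elt r))
    (hB : IsBasisSet B) (hne : B ≠ rootB r)
    (y : Elt r) (hy : y = minElt ((↑B : Set (Elt r)) \ ↑(rootB r)))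
    (i : Fin r) (hi : stdVec r i = minElt ((↑(rootB r) : Set (Elt r)) ∩ ExIn B y))
    (P : Finset (Elt r)) (hP : P = parentB B)
    (hPform : P = insert (stdVec r i) (B.erase y))
    (υ : Elt r) (hυ : υ ∈ ExIn P (stdVec r i))
    (z z' z'' : Elt r) (hz : z = succElt υ)
    (hz' : z' = succElt^[2 ^ (r - 1 - (i : ℕ))] z)
    (hz'' : z'' = succElt^[2 ^ (r - (i : ℕ))] z)
    (hz0 : z ≠ allZeros r) (hzE : z ∉ ExIn P (stdVec r i)) :
    (z' ≠ allZeros r →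
        ∀ c : Elt r, binOf z < binOf c → binOf c < binOf z' →
          c ∉ ExIn P (stdVec r i)) ∧
      (z'' ≠ allZeros r → z' ∉ ExIn P (stdVec r i) →
        ∀ c : Elt r, binOf z < binOf c → binOf c < binOf z'' →
          c ∉ ExIn P (stdVec r i)) ∧
      (z'' = allZeros r → z' ∉ ExIn P (stdVec r i) →
        ∀ c : Elt r, binOf z < binOf c → c ∉ ExIn P (stdVec r i)) := by


  classical
  have hri := i.isLt
  -- the root basis has cardinality r
  have hstd_inj : Function.Injective (stdVec r) := by
    intro a b hab
    by_contra hne'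
    have h1 := congrFun hab a
    simp only [stdVec, if_pos rfl] at h1
    rw [if_neg hne'] at h1
    exact one_ne_zero h1
  have hcardR : (rootB r).card = r := by
    rw [rootB, Finset.card_image_of_injective _ hstd_inj, Finset.card_univ, Fintype.card_fin]
  -- facts about y
  have hminy : ∃ c, c ∈ ((↑B : Set (Elt r)) \ ↑(rootB r)) ∧
      ∀ d ∈ ((↑B : Set (Elt r)) \ ↑(rootB r)), binOf c ≤ binOf d := by
    have hTne : ∃ b ∈ B, b ∉ rootB r := by
      by_contra h
      push_neg at h
      exact hne (Finset.eq_of_subset_of_card_le h (by rw [hB.1, hcardR]))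
    obtain ⟨b, hb1, hb2⟩ := hTne
    obtain ⟨m, hm, hmin⟩ := Finset.exists_min_image (B \ rootB r) binOf
      ⟨b, Finset.mem_sdiff.mpr ⟨hb1, hb2⟩⟩
    refine ⟨m, by simpa using Finset.mem_sdiff.mp hm, fun d hd => ?_⟩
    exact hmin d (Finset.mem_sdiff.mpr (by simpa using hd))
  have hyspec := minElt_spec _ hminy
  rw [← hy] at hyspec
  have hyB : y ∈ B := hyspec.1.1
  have hyR : y ∉ (↑(rootB r) : Set (Elt r)) := hyspec.1.2
  -- facts about e_i
  have hmini : ∃ c, c ∈ ((↑(rootB r) : Set (Elt r)) ∩ ExIn B y) ∧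
      ∀ d ∈ ((↑(rootB r) : Set (Elt r)) ∩ ExIn B y), binOf c ≤ binOf d := by
    by_contra h
    rw [minElt, dif_neg h] at hi
    have h1 := congrFun hi i
    simp only [stdVec, if_pos rfl, allZeros] at h1
    exact one_ne_zero h1
  have hispec := minElt_spec _ hmini
  rw [← hi] at hispec
  have heiEx : stdVec r i ∈ ExIn B y := hispec.1.2
  have heiy : stdVec r i ≠ y := fun h => hyR (h ▸ hispec.1.1)
  have heiB : stdVec r i ∉ B ∧ IsBasisSet (insert (stdVec r i) (B.erase y)) := by
    rcases heiEx with h | h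
    · exact h
    · exact absurd h heiy
  have hPbasis : IsBasisSet P := by rw [hPform]; exact heiB.2
  have hxP : stdVec r i ∈ P := by rw [hPform]; exact Finset.mem_insert_self _ _
  have hPE : P.erase (stdVec r i) = B.erase y := by
    rw [hPform]
    exact Finset.erase_insert (fun h => heiB.1 (Finset.mem_of_mem_erase h))
  set H := Submodule.span (ZMod 2) (↑(B.erase y) : Set (Elt r)) with hH
  have hEx : ∀ c, c ∈ ExIn P (stdVec r i) ↔ c ∉ H := by
    intro c
    rw [exIn_eq_span P hPbasis _ hxP c, hPE]
  have hExB : ∀ c, c ∈ ExIn B y ↔ c ∉ H := fun c => exIn_eq_span B hB y hyB c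
  -- standard vectors with larger index are in H
  have hstdH : ∀ j : Fin r, (i : ℕ) < (j : ℕ) → stdVec r j ∈ H := by
    intro j hj
    by_contra hjH
    have hjEx : stdVec r j ∈ ExIn B y := (hExB _).mpr hjH
    have hle := hispec.2 (stdVec r j)
      ⟨by exact_mod_cast Finset.mem_image.mpr ⟨j, Finset.mem_univ j, rfl⟩, hjEx⟩
    rw [binOf_stdVec, binOf_stdVec] at hle
    have hji := j.isLt
    have hlt : (2 : ℕ) ^ (r - 1 - (j : ℕ)) < 2 ^ (r - 1 - (i : ℕ)) :=
      Nat.pow_lt_pow_right one_lt_two (by omega)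
    omega
  have key : ∀ c d : Elt r,
      binOf c / 2 ^ (r - 1 - (i : ℕ)) = binOf d / 2 ^ (r - 1 - (i : ℕ)) → (c ∈ H ↔ d ∈ H) :=
    fun c d h => mem_H_congr i H hstdH c d (coords_eq_of_div i c d h)
  set w := 2 ^ (r - 1 - (i : ℕ)) with hw
  have hwpos : 0 < w := Nat.pow_pos two_pos
  -- facts about υ and z
  have hυH : υ ∉ H := (hEx υ).mp hυ
  have hυ0 : υ ≠ allZeros r := by
    intro h
    rw [h] at hυH
    exact hυH H.zero_mem
  have hυ1 : υ ≠ allOnes r := by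
    intro h
    apply hz0
    rw [hz, h]
    unfold succElt
    rw [if_pos (Or.inl rfl)]
  have hbz : binOf z = binOf υ + 1 := by rw [hz]; exact succElt_bin υ hυ0 hυ1
  have hzH : z ∈ H := by
    by_contra h
    exact hzE ((hEx z).mpr h)
  have hz_ne0 : binOf z ≠ 0 := (ne_allZeros_iff z).mp hz0
  have hdvd : w ∣ binOf z := by
    by_contra hnd
    have hq : binOf z / w = binOf υ / w := by
      rw [hbz, Nat.succ_div, if_neg (by rw [← hbz]; exact hnd)]
      omega
    exact hυH ((key υ z hq.symm).mpr hzH)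

  have hiterz' := iter_succ z hz0 (2 ^ (r - 1 - (i : ℕ)))
  have hiterz'' := iter_succ z hz0 (2 ^ (r - (i : ℕ)))
  have h2w : 2 ^ (r - (i : ℕ)) = 2 * w := by
    rw [hw, show r - (i : ℕ) = (r - 1 - (i : ℕ)) + 1 by omega, pow_succ]
    ring
  have hbound := binOf_lt z
  have kill : ∀ c h0 : Elt r, binOf c / w = binOf h0 / w → h0 ∈ H →
      c ∉ ExIn P (stdVec r i) := by
    intro c h0 hqq hh0 hcEx
    exact (hEx c).mp hcEx ((key c h0 hqq).mpr hh0)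
  refine ⟨?_, ?_, ?_⟩
  · -- part (ii)
    intro hz'0 c h1 h2
    have hbz' : binOf z' = binOf z + w := by
      rcases lt_or_ge (binOf z + w) (2 ^ r) with h | h
      · rw [hz']; exact hiterz'.1 h
      · exact absurd (hz' ▸ hiterz'.2 h) hz'0
    rw [hbz'] at h2
    exact kill c z (div_eq_helper hwpos hdvd (le_of_lt h1) h2) hzH
  · -- part (iii)
    intro hz''0 hz'E c h1 h2
    have hbz'' : binOf z'' = binOf z + 2 * w := by
      rcases lt_or_ge (binOf z + 2 ^ (r - (i : ℕ))) (2 ^ r) with h | h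
      · rw [hz'', hiterz''.1 h, h2w]
      · exact absurd (hz'' ▸ hiterz''.2 h) hz''0
    have hlt2 : binOf z + 2 * w < 2 ^ r := by
      rcases lt_or_ge (binOf z + 2 ^ (r - (i : ℕ))) (2 ^ r) with h | h
      · omega
      · exact absurd (hz'' ▸ hiterz''.2 h) hz''0
    have hbz' : binOf z' = binOf z + w := by
      rw [hz']; exact hiterz'.1 (by omega)
    have hz'H : z' ∈ H := by
      by_contra h
      exact hz'E ((hEx z').mpr h)
    rw [hbz''] at h2
    rcases lt_or_ge (binOf c) (binOf z + w) with hcase | hcase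
    · exact kill c z (div_eq_helper hwpos hdvd (le_of_lt h1) hcase) hzH
    · have hdvd' : w ∣ binOf z' := by
        rw [hbz']
        exact Nat.dvd_add hdvd dvd_rfl
      refine kill c z' (div_eq_helper hwpos hdvd' ?_ ?_) hz'H
      · rw [hbz']; exact hcase
      · rw [hbz']; omega
  · -- part (iv)
    intro hz''0 hz'E c h1
    have hge : 2 ^ r ≤ binOf z + 2 ^ (r - (i : ℕ)) := by
      by_contra h
      push_neg at h
      have hbz'' := hiterz''.1 h
      rw [← hz''] at hbz''
      rw [hz''0, binOf_allZeros] at hbz''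
      omega
    have hc2 : binOf c < binOf z + 2 * w := by
      have := binOf_lt c
      omega
    rcases lt_or_ge (binOf c) (binOf z + w) with hcase | hcase
    · exact kill c z (div_eq_helper hwpos hdvd (le_of_lt h1) hcase) hzH
    · have hltw : binOf z + w < 2 ^ r := by
        have := binOf_lt c
        omega
      have hbz' : binOf z' = binOf z + w := by
        rw [hz']; exact hiterz'.1 hltw
      have hz'H : z' ∈ H := by
        by_contra h
        exact hz'E ((hEx z').mpr h)
      have hdvd' : w ∣ binOf z' := by
        rw [hbz']
        exact Nat.dvd_add hdvd dvd_rfl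
      refine kill c z' (div_eq_helper hwpos hdvd' ?_ ?_) hz'H
      · rw [hbz']; exact hcase
      · rw [hbz']; omega
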